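/- Let λ ∈ ℂ^n and 1 ≤ i ≤ k ≤ n−1, and assume s_j * λ < λ for every j with i ≤ j ≤ k. Then for every j with i ≤ j ≤ k one has s_j s_{j+1} ⋯ s_k * λ < s_{j+1} s_{j+2} ⋯ s_k * λ (the empty product being λ); in particular s_i s_{i+1} ⋯ s_k * λ < s_{i+1} ⋯ s_k * λ ≤ λ, so the weights s_j ⋯ s_k * λ form a decreasing string below λ. -/
import Mathlib


open Finset

/-- The 1-based `i`-th coordinate of a weight `λ ∈ ℂ^n` (0 if out of range). -/
def coord {n : ℕ} (lam : Fin n → ℂ) (i : ℕ) : ℂ :=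
  if h : 1 ≤ i ∧ i ≤ n then lam ⟨i - 1, by omega⟩ else 0

/-- The star action of the generator `s_i` (1 ≤ i ≤ n-1) on weights:
swap coordinates `i` and `i+1` if their sum is nonzero, otherwise replace
`(λ_i, λ_{i+1})` by `(λ_{i+1} - 1, λ_i + 1)`. -/
noncomputable def sStar {n : ℕ} (i : ℕ) (lam : Fin n → ℂ) : Fin n → ℂ := fun j =>
  if (j : ℕ) + 1 = i then
    (if coord lam i + coord lam (i + 1) = 0 then coord lam (i + 1) - 1 else coord lam (i + 1))
  else if (j : ℕ) = i then
    (if coord lam i + coord lam (i + 1) = 0 then coord lam i + 1 else coord lam i)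
  else lam j

/-- The partial order on weights: `μ ≤ ν` iff each partial sum
`Σ_{j=1}^i (ν_j - μ_j)` (1 ≤ i ≤ n-1) is a nonnegative integer and the
total sum `Σ_{j=1}^n (ν_j - μ_j)` is zero. -/
def wle {n : ℕ} (mu nu : Fin n → ℂ) : Prop :=
  (∀ i : ℕ, 1 ≤ i → i ≤ n - 1 →
    ∃ m : ℕ, ∑ j ∈ Finset.Icc 1 i, (coord nu j - coord mu j) = (m : ℂ)) ∧
  ∑ j ∈ Finset.Icc 1 n, (coord nu j - coord mu j) = 0

/-- Strict inequality of weights. -/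
def wlt {n : ℕ} (mu nu : Fin n → ℂ) : Prop := wle mu nu ∧ mu ≠ nu

/-- `a ≻ b` iff `a - b ∈ ℤ_{>0}` or `a = b = 0`. -/
def csucc (a b : ℂ) : Prop := (∃ m : ℤ, 0 < m ∧ a - b = (m : ℂ)) ∨ (a = 0 ∧ b = 0)

/-- `starDesc j k λ = s_j s_{j+1} ⋯ s_k * λ` (apply `s_k` first, `s_j` last);
equals `λ` when `j > k`. -/
noncomputable def starDesc {n : ℕ} (j k : ℕ) (lam : Fin n → ℂ) : Fin n → ℂ :=
  (List.range' j (k + 1 - j)).foldr (fun i mu => sStar i mu) lam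

/-- `starAsc j k λ = s_k s_{k-1} ⋯ s_j * λ` (apply `s_j` first, `s_k` last);
equals `λ` when `j > k`. -/
noncomputable def starAsc {n : ℕ} (j k : ℕ) (lam : Fin n → ℂ) : Fin n → ℂ :=
  (List.range' j (k + 1 - j)).foldl (fun mu i => sStar i mu) lam


lemma coord_eq {n : ℕ} (lam : Fin n → ℂ) (i : ℕ) (h1 : 1 ≤ i) (h2 : i ≤ n) :
    coord lam i = lam ⟨i - 1, by omega⟩ := dif_pos ⟨h1, h2⟩

lemma coord_sStar_self {n : ℕ} (mu : Fin n → ℂ) (j : ℕ) (hj1 : 1 ≤ j) (hjn : j + 1 ≤ n) :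
    coord (sStar j mu) j =
      if coord mu j + coord mu (j + 1) = 0 then coord mu (j + 1) - 1 else coord mu (j + 1) := by
  rw [coord_eq _ j hj1 (by omega)]
  simp only [sStar]
  rw [if_pos (by omega : (j : ℕ) - 1 + 1 = j)]

lemma coord_sStar_succ {n : ℕ} (mu : Fin n → ℂ) (j : ℕ) (hj1 : 1 ≤ j) (hjn : j + 1 ≤ n) :
    coord (sStar j mu) (j + 1) =
      if coord mu j + coord mu (j + 1) = 0 then coord mu j + 1 else coord mu j := by
  rw [coord_eq _ (j + 1) (by omega) hjn]
  simp only [sStar]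
  rw [if_neg (by omega : ¬ ((j + 1 : ℕ) - 1 + 1 = j)), if_pos (by omega : (j + 1 : ℕ) - 1 = j)]

lemma coord_sStar_other {n : ℕ} (mu : Fin n → ℂ) (j t : ℕ) (h1 : t ≠ j) (h2 : t ≠ j + 1) :
    coord (sStar j mu) t = coord mu t := by
  by_cases ht : 1 ≤ t ∧ t ≤ n
  · rw [coord_eq _ t ht.1 ht.2, coord_eq _ t ht.1 ht.2]
    simp only [sStar]
    rw [if_neg (by omega : ¬ ((t : ℕ) - 1 + 1 = j)), if_neg (by omega : ¬ ((t : ℕ) - 1 = j))]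
  · simp only [coord, dif_neg ht]

lemma sum_window {n : ℕ} (mu nu : Fin n → ℂ) (j : ℕ) (hj : 1 ≤ j)
    (hfix : ∀ t, t ≠ j → t ≠ j + 1 → coord nu t = coord mu t) (i : ℕ) :
    ∑ t ∈ Finset.Icc 1 i, (coord nu t - coord mu t) =
      (if j ≤ i then coord nu j - coord mu j else 0) +
      (if j + 1 ≤ i then coord nu (j + 1) - coord mu (j + 1) else 0) := by
  have key : ∀ t ∈ Finset.Icc 1 i, coord nu t - coord mu t =
      (if t = j then coord nu j - coord mu j else 0) +
      (if t = j + 1 then coord nu (j + 1) - coord mu (j + 1) else 0) := by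
    intro t _
    by_cases h1 : t = j
    · subst h1; rw [if_pos rfl, if_neg (by omega)]; ring
    · by_cases h2 : t = j + 1
      · subst h2; rw [if_neg (by omega), if_pos rfl]; ring
      · rw [hfix t h1 h2, if_neg h1, if_neg h2]; ring
  rw [Finset.sum_congr rfl key, Finset.sum_add_distrib,
    Finset.sum_ite_eq' (Finset.Icc 1 i) j (fun _ => coord nu j - coord mu j),
    Finset.sum_ite_eq' (Finset.Icc 1 i) (j + 1) (fun _ => coord nu (j + 1) - coord mu (j + 1))]
  simp only [Finset.mem_Icc]
  congr 1
  · by_cases hji : j ≤ i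
    · rw [if_pos ⟨hj, hji⟩, if_pos hji]
    · rw [if_neg (by omega), if_neg hji]
  · by_cases hji : j + 1 ≤ i
    · rw [if_pos ⟨by omega, hji⟩, if_pos hji]
    · rw [if_neg (by omega), if_neg hji]

lemma wle_refl {n : ℕ} (mu : Fin n → ℂ) : wle mu mu := by
  constructor
  · intro i _ _; exact ⟨0, by simp⟩
  · simp

lemma wle_trans {n : ℕ} {a b c : Fin n → ℂ} (h1 : wle a b) (h2 : wle b c) : wle a c := by
  have hsum : ∀ s : Finset ℕ, ∑ t ∈ s, (coord c t - coord a t) =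
      (∑ t ∈ s, (coord c t - coord b t)) + ∑ t ∈ s, (coord b t - coord a t) := by
    intro s; rw [← Finset.sum_add_distrib]; apply Finset.sum_congr rfl; intro t _; ring
  constructor
  · intro i hi1 hi2
    obtain ⟨m1, hm1⟩ := h1.1 i hi1 hi2
    obtain ⟨m2, hm2⟩ := h2.1 i hi1 hi2
    exact ⟨m2 + m1, by rw [hsum, hm1, hm2]; push_cast; ring⟩
  · rw [hsum, h1.2, h2.2]; ring

lemma pos_of_csucc (a b : ℂ) (h : csucc a b) :
    ∃ m : ℤ, 0 < m ∧ a - (if a + b = 0 then b - 1 else b) = (m : ℂ) := by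
  rcases h with ⟨m, hm, hab⟩ | ⟨ha, hb⟩
  · by_cases hs : a + b = 0
    · rw [if_pos hs]
      exact ⟨m + 1, by omega, by push_cast; rw [show a - (b - 1) = (a - b) + 1 by ring, hab]⟩
    · rw [if_neg hs]; exact ⟨m, hm, hab⟩
  · subst ha; subst hb
    rw [if_pos (by ring)]
    exact ⟨1, one_pos, by push_cast; ring⟩

lemma sStar_eq_self {n : ℕ} (lam : Fin n → ℂ) (j : ℕ) (hj1 : 1 ≤ j)
    (h1 : (if coord lam j + coord lam (j + 1) = 0 then coord lam (j + 1) - 1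
      else coord lam (j + 1)) = coord lam j)
    (h2 : (if coord lam j + coord lam (j + 1) = 0 then coord lam j + 1
      else coord lam j) = coord lam (j + 1)) :
    sStar j lam = lam := by
  funext t
  simp only [sStar]
  by_cases ht1 : (t : ℕ) + 1 = j
  · rw [if_pos ht1]
    have : lam t = coord lam j := by
      rw [coord_eq lam j hj1 (by omega)]
      congr 1
      exact Fin.ext (by simp; omega)
    rw [this, h1]
  · rw [if_neg ht1]
    by_cases ht2 : (t : ℕ) = j
    · rw [if_pos ht2]
      have : lam t = coord lam (j + 1) := by
        rw [coord_eq lam (j + 1) (by omega) (by omega)]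
        congr 1
        exact Fin.ext (by simp; omega)
      rw [this, h2]
    · rw [if_neg ht2]

lemma wlt_sStar_of_csucc {n : ℕ} (mu : Fin n → ℂ) (j : ℕ) (hj1 : 1 ≤ j) (hjn : j + 1 ≤ n)
    (hc : csucc (coord mu j) (coord mu (j + 1))) : wlt (sStar j mu) mu := by
  obtain ⟨m, hm, hd⟩ := pos_of_csucc (coord mu j) (coord mu (j + 1)) hc
  rw [← coord_sStar_self mu j hj1 hjn] at hd
  have hd' : coord mu (j + 1) - coord (sStar j mu) (j + 1) = -(m : ℂ) := by
    rw [coord_sStar_succ mu j hj1 hjn]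
    rw [coord_sStar_self mu j hj1 hjn] at hd
    by_cases hs : coord mu j + coord mu (j + 1) = 0
    · rw [if_pos hs]; rw [if_pos hs] at hd; linear_combination -hd
    · rw [if_neg hs]; rw [if_neg hs] at hd; linear_combination -hd
  have hfix : ∀ t, t ≠ j → t ≠ j + 1 → coord mu t = coord (sStar j mu) t :=
    fun t a b => (coord_sStar_other mu j t a b).symm
  constructor
  · constructor
    · intro i hi1 hi2
      rw [sum_window (sStar j mu) mu j hj1 hfix i]
      by_cases hc1 : j + 1 ≤ i
      · rw [if_pos (by omega), if_pos hc1, hd, hd']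
        exact ⟨0, by push_cast; ring⟩
      · by_cases hc2 : j ≤ i
        · rw [if_pos hc2, if_neg hc1, hd]
          refine ⟨m.toNat, ?_⟩
          have : ((m.toNat : ℕ) : ℂ) = (m : ℂ) := by
            rw [show ((m.toNat : ℕ) : ℂ) = ((m.toNat : ℤ) : ℂ) by push_cast; ring,
              Int.toNat_of_nonneg hm.le]
          rw [this]; ring
        · rw [if_neg hc2, if_neg hc1]
          exact ⟨0, by push_cast; ring⟩
    · rw [sum_window (sStar j mu) mu j hj1 hfix n]
      rw [if_pos (by omega), if_pos hjn, hd, hd']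
      ring
  · intro heq
    have : coord (sStar j mu) j = coord mu j := by rw [heq]
    rw [this] at hd
    have : (m : ℂ) = 0 := by linear_combination -hd
    have : m = 0 := by exact_mod_cast this
    omega

lemma csucc_of_wlt {n : ℕ} (lam : Fin n → ℂ) (j : ℕ) (hj1 : 1 ≤ j) (hjn : j + 1 ≤ n)
    (hw : wlt (sStar j lam) lam) : csucc (coord lam j) (coord lam (j + 1)) := by
  have hfix : ∀ t, t ≠ j → t ≠ j + 1 → coord lam t = coord (sStar j lam) t :=
    fun t a b => (coord_sStar_other lam j t a b).symm
  obtain ⟨m, hm⟩ := hw.1.1 j hj1 (by omega)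
  rw [sum_window (sStar j lam) lam j hj1 hfix j, if_pos le_rfl, if_neg (by omega),
    coord_sStar_self lam j hj1 hjn] at hm
  by_cases hs : coord lam j + coord lam (j + 1) = 0
  · rw [if_pos hs] at hm
    -- coord lam j - (coord lam (j+1) - 1) = m, i.e. 2a + 1 = m
    match m, hm with
    | 0, hm =>
      exfalso
      apply hw.2
      apply sStar_eq_self lam j hj1
      · rw [if_pos hs]
        push_cast at hm
        linear_combination -hm
      · rw [if_pos hs]
        push_cast at hm
        linear_combination hm
    | 1, hm =>
      right
      push_cast at hm
      constructor
      · linear_combination (hm + hs) / 2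
      · linear_combination (hs - hm) / 2
    | (p + 2), hm =>
      left
      refine ⟨p + 1, by omega, ?_⟩
      push_cast at hm ⊢
      linear_combination hm
  · rw [if_neg hs] at hm
    match m, hm with
    | 0, hm =>
      exfalso
      apply hw.2
      apply sStar_eq_self lam j hj1
      · rw [if_neg hs]
        push_cast at hm
        linear_combination -hm
      · rw [if_neg hs]
        push_cast at hm
        linear_combination hm
    | (p + 1), hm =>
      left
      exact ⟨p + 1, by omega, by push_cast at hm ⊢; linear_combination hm⟩

lemma starDesc_of_gt {n : ℕ} (lam : Fin n → ℂ) (j k : ℕ) (h : k < j) :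
    starDesc j k lam = lam := by
  unfold starDesc
  rw [show k + 1 - j = 0 by omega]
  rfl

lemma starDesc_step {n : ℕ} (lam : Fin n → ℂ) (j k : ℕ) (h : j ≤ k) :
    starDesc j k lam = sStar j (starDesc (j + 1) k lam) := by
  unfold starDesc
  rw [show k + 1 - j = (k + 1 - (j + 1)) + 1 by omega, List.range'_succ, List.foldr_cons]

lemma coord_starDesc_of_lt {n : ℕ} (lam : Fin n → ℂ) (b : ℕ) :
    ∀ d a t, b + 1 - a = d → t < a → coord (starDesc a b lam) t = coord lam t := by
  intro d
  induction d with
  | zero => intro a t hd _; rw [starDesc_of_gt lam a b (by omega)]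
  | succ d ih =>
    intro a t hd ht
    rw [starDesc_step lam a b (by omega), coord_sStar_other _ a t (by omega) (by omega)]
    exact ih (a + 1) t (by omega) (by omega)

lemma key_csucc {n : ℕ} (hn : 2 ≤ n) (lam : Fin n → ℂ) (i k : ℕ)
    (hi : 1 ≤ i) (hk : k ≤ n - 1)
    (hcs : ∀ j, i ≤ j → j ≤ k → csucc (coord lam j) (coord lam (j + 1))) :
    ∀ d j, i ≤ j → j ≤ k → k - j = d →
      csucc (coord lam j) (coord (starDesc (j + 1) k lam) (j + 1)) := by
  intro d
  induction d with
  | zero =>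
    intro j hj1 hj2 hd
    have : j = k := by omega
    subst this
    rw [starDesc_of_gt lam (j + 1) j (by omega)]
    exact hcs j hj1 hj2
  | succ d ih =>
    intro j hj1 hj2 hd
    -- first part at j+1:
    have hfst := ih (j + 1) (by omega) (by omega) (by omega)
    -- positivity of lam_{j+1} - c_{j+1}
    obtain ⟨m, hm, hdiff⟩ := pos_of_csucc _ _ hfst
    have hmu : coord (starDesc (j + 1 + 1) k lam) (j + 1) = coord lam (j + 1) :=
      coord_starDesc_of_lt lam k (k + 1 - (j + 1 + 1)) (j + 1 + 1) (j + 1) rfl (by omega)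
    have hcval : coord (starDesc (j + 1) k lam) (j + 1) =
        if coord lam (j + 1) + coord (starDesc (j + 1 + 1) k lam) (j + 1 + 1) = 0
        then coord (starDesc (j + 1 + 1) k lam) (j + 1 + 1) - 1
        else coord (starDesc (j + 1 + 1) k lam) (j + 1 + 1) := by
      rw [starDesc_step lam (j + 1) k (by omega),
        coord_sStar_self _ (j + 1) (by omega) (by omega), hmu]
    rw [← hcval] at hdiff
    -- hdiff : coord lam (j+1) - coord (starDesc (j+1) k lam) (j+1) = m
    -- now combine with hcs j
    rcases hcs j hj1 (by omega) with ⟨p, hp, hpe⟩ | ⟨ha, hb⟩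
    · left
      refine ⟨p + m, by omega, ?_⟩
      push_cast
      linear_combination hpe + hdiff
    · left
      refine ⟨m, hm, ?_⟩
      rw [ha]
      linear_combination hdiff - hb

theorem stmt6 (n : ℕ) (hn : 2 ≤ n) (lam : Fin n → ℂ) (i k : ℕ)
    (hi : 1 ≤ i) (hik : i ≤ k) (hk : k ≤ n - 1)
    (h : ∀ j, i ≤ j → j ≤ k → wlt (sStar j lam) lam) :
    (∀ j, i ≤ j → j ≤ k → wlt (starDesc j k lam) (starDesc (j + 1) k lam)) ∧
    wle (starDesc (i + 1) k lam) lam := by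

  have hcs : ∀ j, i ≤ j → j ≤ k → csucc (coord lam j) (coord lam (j + 1)) := fun j h1 h2 =>
    csucc_of_wlt lam j (by omega) (by omega) (h j h1 h2)
  have main : ∀ j, i ≤ j → j ≤ k →
      wlt (starDesc j k lam) (starDesc (j + 1) k lam) := by
    intro j hj1 hj2
    rw [starDesc_step lam j k hj2]
    apply wlt_sStar_of_csucc _ j (by omega) (by omega)
    rw [coord_starDesc_of_lt lam k (k + 1 - (j + 1)) (j + 1) j rfl (by omega)]
    exact key_csucc hn lam i k (by omega) hk hcs (k - j) j hj1 hj2 rfl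
  refine ⟨main, ?_⟩
  have chain : ∀ d j, i ≤ j → j ≤ k + 1 → k + 1 - j = d → wle (starDesc j k lam) lam := by
    intro d
    induction d with
    | zero =>
      intro j _ hj2 hd
      rw [starDesc_of_gt lam j k (by omega)]
      exact wle_refl lam
    | succ d ih =>
      intro j hj1 hj2 hd
      exact wle_trans (main j hj1 (by omega)).1 (ih (j + 1) (by omega) (by omega) (by omega))
  exact chain (k + 1 - (i + 1)) (i + 1) (by omega) (by omega) rfl
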